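/- arXiv:1601.07712 — 4 statements merged into one kernel-verified Lean document; each statement's English description precedes it below -/
import Mathlib

section
/- Let N ∈ ℕ and let ρ ∈ L¹(ℝ) be nonnegative with finite moments up to order N, i.e. ∫_ℝ |x|^k ρ(x) dx < ∞ for k = 0, …, N. Let S = S[ρ] be given by S(x) = (1/2) ∫_ℝ e^{−|x−y|} ρ(y) dy. Then S has finite moments up to order N, and, setting R_k = ∫_ℝ x^k ρ(x) dx and S_k = ∫_ℝ x^k S(x) dx, the relation S_k = R_k + k(k−1) S_{k−2} holds for every k = 0, …, N (with the convention that the term k(k−1)S_{k−2} vanishes for k = 0, 1). -/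
/-!
By Fubini, `S_k = (1/2) ∫ ρ(y) M_k(y) dy` with `M_k(y) = ∫ x^k e^{-|x-y|} dx`; the kernel is
integrable on `ℝ × ℝ` because `|x|^k ≤ 2^{k-1} (|x-y|^k + |y|^k)`. Substituting `x = t + y` and
expanding `(t+y)^k`, the Gamma integral makes `M_k` the polynomial
`∑ᵢ (1 + (-1)^i) k!/(k-i)! y^{k-i}`, which satisfies `M_k = 2 y^k + k(k-1) M_{k-2}`;
integrating this against `ρ / 2` gives the recursion.
-/

open MeasureTheory Real

noncomputable def Schem (ρ : ℝ → ℝ) (x : ℝ) : ℝ :=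
  (1 / 2) * ∫ y : ℝ, Real.exp (-|x - y|) * ρ y

open Set

section Halves

variable {E : Type*} [NormedAddCommGroup E] {f : ℝ → E}

theorem integrable_of_integrableOn_Ioi_of_comp_neg (hf : IntegrableOn f (Ioi 0))
    (hf_neg : IntegrableOn (fun t => f (-t)) (Ioi 0)) : Integrable f := by
  rw [← integrableOn_univ, ← Iic_union_Ioi (a := 0), integrableOn_union]
  refine ⟨?_, hf⟩
  have hf_neg' : IntegrableOn (fun t => f (-t)) (Ici (-0)) := by
    rwa [neg_zero, integrableOn_Ici_iff_integrableOn_Ioi]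
  simpa only [neg_neg] using hf_neg'.comp_neg_Iic

theorem integral_eq_integral_Ioi_add_integral_Ioi_comp_neg [NormedSpace ℝ E] (hf : Integrable f) :
    ∫ t, f t = (∫ t in Ioi 0, f t) + ∫ t in Ioi 0, f (-t) := by
  rw [integral_comp_neg_Ioi, neg_zero, add_comm,
    intervalIntegral.integral_Iic_add_Ioi hf.integrableOn hf.integrableOn]

end Halves

theorem integrableOn_Ioi_pow_mul_exp_neg (j : ℕ) :
    IntegrableOn (fun t : ℝ => t ^ j * exp (-t)) (Ioi 0) :=
  (GammaIntegral_convergent (s := j + 1) (by positivity)).congr_fun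
    (fun t _ => by simp [mul_comm]) measurableSet_Ioi

theorem integral_Ioi_pow_mul_exp_neg (j : ℕ) :
    ∫ t in Ioi (0 : ℝ), t ^ j * exp (-t) = j.factorial := by
  rw [← Gamma_nat_eq_factorial, Gamma_eq_integral (by positivity)]
  exact setIntegral_congr_fun measurableSet_Ioi fun t _ => by simp [mul_comm]

theorem pow_mul_exp_neg_abs_of_pos {t : ℝ} (ht : t ∈ Ioi 0) (j : ℕ) :
    t ^ j * exp (-|t|) = t ^ j * exp (-t) := by
  rw [abs_of_pos ht]

theorem neg_pow_mul_exp_neg_abs_of_pos {t : ℝ} (ht : t ∈ Ioi 0) (j : ℕ) :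
    (-t) ^ j * exp (-|-t|) = (-1) ^ j * (t ^ j * exp (-t)) := by
  rw [abs_neg, abs_of_pos ht, neg_pow, mul_assoc]

theorem integrable_pow_mul_exp_neg_abs (j : ℕ) :
    Integrable fun t : ℝ => t ^ j * exp (-|t|) :=
  integrable_of_integrableOn_Ioi_of_comp_neg
    ((integrableOn_Ioi_pow_mul_exp_neg j).congr_fun
      (fun _ ht => (pow_mul_exp_neg_abs_of_pos ht j).symm) measurableSet_Ioi)
    (IntegrableOn.congr_fun ((integrableOn_Ioi_pow_mul_exp_neg j).const_mul _)
      (fun _ ht => (neg_pow_mul_exp_neg_abs_of_pos ht j).symm) measurableSet_Ioi)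

theorem integral_pow_mul_exp_neg_abs (j : ℕ) :
    ∫ t : ℝ, t ^ j * exp (-|t|) = (1 + (-1) ^ j) * j.factorial := by
  rw [integral_eq_integral_Ioi_add_integral_Ioi_comp_neg (integrable_pow_mul_exp_neg_abs j)]
  rw [setIntegral_congr_fun measurableSet_Ioi fun _ ht => pow_mul_exp_neg_abs_of_pos ht j,
    setIntegral_congr_fun measurableSet_Ioi fun _ ht => neg_pow_mul_exp_neg_abs_of_pos ht j,
    integral_const_mul, integral_Ioi_pow_mul_exp_neg]
  ring

theorem integrable_abs_pow_mul_exp_neg_abs (j : ℕ) :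
    Integrable fun t : ℝ => |t| ^ j * exp (-|t|) := by
  simpa [abs_mul, abs_pow] using (integrable_pow_mul_exp_neg_abs j).abs

theorem integrable_exp_neg_abs : Integrable fun t : ℝ => exp (-|t|) := by
  simpa using integrable_pow_mul_exp_neg_abs 0

noncomputable def laplaceMoment (k : ℕ) (y : ℝ) : ℝ :=
  ∑ i ∈ Finset.range (k + 1), (1 + (-1) ^ i) * k.descFactorial i * y ^ (k - i)

theorem integral_pow_mul_exp_neg_abs_sub (k : ℕ) (y : ℝ) :
    ∫ x : ℝ, x ^ k * exp (-|x - y|) = laplaceMoment k y := by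
  have binomial (t : ℝ) : (t + y) ^ k * exp (-|t|) = ∑ i ∈ Finset.range (k + 1),
      (k.choose i * y ^ (k - i)) * (t ^ i * exp (-|t|)) := by
    rw [add_pow, Finset.sum_mul]
    exact Finset.sum_congr rfl fun i _ => by ring
  rw [← integral_add_right_eq_self _ y]
  simp only [add_sub_cancel_right, binomial]
  rw [integral_finsetSum _ fun i _ => (integrable_pow_mul_exp_neg_abs i).const_mul _]
  refine Finset.sum_congr rfl fun i _ => ?_
  rw [integral_const_mul, integral_pow_mul_exp_neg_abs, Nat.descFactorial_eq_factorial_mul_choose]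
  push_cast
  ring

theorem laplaceMoment_eq (k : ℕ) (y : ℝ) :
    laplaceMoment k y = 2 * y ^ k + (k : ℝ) * ((k : ℝ) - 1) * laplaceMoment (k - 2) y := by
  match k with
  | 0 => norm_num [laplaceMoment]
  | 1 => norm_num [laplaceMoment, Finset.sum_range_succ]
  | m + 2 =>
    have shift (i : ℕ) : (1 + (-1 : ℝ) ^ (i + 1 + 1)) * (m + 2).descFactorial (i + 1 + 1) *
        y ^ (m + 2 - (i + 1 + 1)) =
          (m + 2 : ℕ) * ((m + 2 : ℕ) - 1) * ((1 + (-1) ^ i) * m.descFactorial i * y ^ (m - i)) := by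
      rw [Nat.succ_descFactorial_succ, Nat.succ_descFactorial_succ,
        show m + 2 - (i + 1 + 1) = m - i by omega]
      push_cast
      ring
    rw [laplaceMoment, Finset.sum_range_succ', Finset.sum_range_succ']
    simp only [shift, ← Finset.mul_sum, Nat.add_sub_cancel, laplaceMoment]
    norm_num
    ring

section Fubini

variable {ρ g : ℝ → ℝ} {k : ℕ}

theorem integrable_mul_exp_neg_abs_sub_mul (hρ : Integrable ρ)
    (hρk : Integrable fun y => |y| ^ k * ρ y) (hg : Continuous g) (hgk : ∀ x, |g x| ≤ |x| ^ k) :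
    Integrable (fun p : ℝ × ℝ => g p.1 * exp (-|p.1 - p.2|) * ρ p.2) (volume.prod volume) := by
  have hmeas : AEStronglyMeasurable (fun p : ℝ × ℝ => g p.1 * exp (-|p.1 - p.2|) * ρ p.2)
      (volume.prod volume) :=
    (Continuous.aestronglyMeasurable (by fun_prop)).mul hρ.1.comp_snd
  have hshear := measurePreserving_add_prod (volume : Measure ℝ) volume
  rw [← hshear.integrable_comp hmeas]
  have hdom : Integrable (fun p : ℝ × ℝ => 2 ^ (k - 1) *
      (|p.1| ^ k * exp (-|p.1|) * ‖ρ p.2‖ + exp (-|p.1|) * ‖|p.2| ^ k * ρ p.2‖))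
      (volume.prod volume) :=
    (((integrable_abs_pow_mul_exp_neg_abs k).mul_prod hρ.norm).add
      (integrable_exp_neg_abs.mul_prod hρk.norm)).const_mul _
  refine hdom.mono' (hmeas.comp_measurePreserving hshear) (ae_of_all _ fun ⟨t, y⟩ => ?_)
  simp only [Function.comp_apply, add_sub_cancel_right, norm_mul, norm_eq_abs, abs_pow, abs_abs,
    abs_exp]
  calc |g (t + y)| * exp (-|t|) * |ρ y|
      ≤ (|t| + |y|) ^ k * exp (-|t|) * |ρ y| := by
        gcongr
        exact (hgk _).trans (pow_le_pow_left₀ (abs_nonneg _) (abs_add_le t y) k)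
    _ ≤ 2 ^ (k - 1) * (|t| ^ k + |y| ^ k) * exp (-|t|) * |ρ y| := by
        gcongr
        exact add_pow_le (abs_nonneg _) (abs_nonneg _) k
    _ = _ := by ring

theorem mul_Schem_eq (x : ℝ) :
    g x * Schem ρ x = 1 / 2 * ∫ y, g x * exp (-|x - y|) * ρ y := by
  simp only [Schem, mul_assoc, integral_const_mul]
  ring

theorem integrable_mul_Schem (hρ : Integrable ρ) (hρk : Integrable fun y => |y| ^ k * ρ y)
    (hg : Continuous g) (hgk : ∀ x, |g x| ≤ |x| ^ k) :
    Integrable fun x => g x * Schem ρ x := by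
  simp_rw [mul_Schem_eq]
  exact (integrable_mul_exp_neg_abs_sub_mul hρ hρk hg hgk).integral_prod_left.const_mul _

theorem integral_mul_Schem (hρ : Integrable ρ) (hρk : Integrable fun y => |y| ^ k * ρ y)
    (hg : Continuous g) (hgk : ∀ x, |g x| ≤ |x| ^ k) :
    ∫ x, g x * Schem ρ x = 1 / 2 * ∫ y, (∫ x, g x * exp (-|x - y|)) * ρ y := by
  simp_rw [mul_Schem_eq, ← integral_mul_const]
  rw [integral_const_mul, integral_integral_swap (integrable_mul_exp_neg_abs_sub_mul hρ hρk hg hgk)]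

theorem integrable_integral_mul_exp_neg_abs_sub_mul (hρ : Integrable ρ)
    (hρk : Integrable fun y => |y| ^ k * ρ y) (hg : Continuous g) (hgk : ∀ x, |g x| ≤ |x| ^ k) :
    Integrable fun y => (∫ x, g x * exp (-|x - y|)) * ρ y := by
  simpa only [integral_mul_const] using
    (integrable_mul_exp_neg_abs_sub_mul hρ hρk hg hgk).integral_prod_right

theorem integral_pow_mul_Schem (hρ : Integrable ρ) (hρk : Integrable fun y => |y| ^ k * ρ y) :
    ∫ x, x ^ k * Schem ρ x = 1 / 2 * ∫ y, laplaceMoment k y * ρ y := by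
  simp_rw [integral_mul_Schem hρ hρk (continuous_pow k) (fun x => (abs_pow x k).le),
    integral_pow_mul_exp_neg_abs_sub]

theorem integrable_laplaceMoment_mul (hρ : Integrable ρ)
    (hρk : Integrable fun y => |y| ^ k * ρ y) : Integrable fun y => laplaceMoment k y * ρ y := by
  simpa only [integral_pow_mul_exp_neg_abs_sub] using
    integrable_integral_mul_exp_neg_abs_sub_mul hρ hρk (continuous_pow k)
      (fun x => (abs_pow x k).le)

end Fubini

theorem Schem_moment_recursion_general (N : ℕ) (ρ : ℝ → ℝ)
    (hmom : ∀ k ≤ N, Integrable (fun x : ℝ => |x| ^ k * ρ x)) :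
    (∀ k ≤ N, Integrable (fun x : ℝ => |x| ^ k * Schem ρ x)) ∧
    (∀ k ≤ N, ∫ x : ℝ, x ^ k * Schem ρ x =
      (∫ x : ℝ, x ^ k * ρ x) +
        (k : ℝ) * ((k : ℝ) - 1) * ∫ x : ℝ, x ^ (k - 2) * Schem ρ x) := by
  have hρ : Integrable ρ := by simpa using hmom 0 (Nat.zero_le N)
  refine ⟨fun k hk => integrable_mul_Schem hρ (hmom k hk) (continuous_abs.pow k)
    fun x => by rw [abs_pow, abs_abs], fun k hk => ?_⟩
  have hρk₂ := hmom (k - 2) (by omega)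
  have hρk : Integrable fun y => y ^ k * ρ y :=
    (hmom k hk).mono ((continuous_pow k).aestronglyMeasurable.mul hρ.1)
      (ae_of_all _ fun y => by simp)
  have split (y : ℝ) : laplaceMoment k y * ρ y =
      2 * (y ^ k * ρ y) + (k : ℝ) * ((k : ℝ) - 1) * (laplaceMoment (k - 2) y * ρ y) := by
    rw [laplaceMoment_eq]
    ring
  rw [integral_pow_mul_Schem hρ (hmom k hk), integral_pow_mul_Schem hρ hρk₂]
  simp_rw [split]
  rw [integral_add (hρk.const_mul 2) ((integrable_laplaceMoment_mul hρ hρk₂).const_mul _),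
    integral_const_mul, integral_const_mul]
  ring

/-- If the nonnegative density `ρ` has finite moments up to order `N`, then so
has `S[ρ]`, and `S_k = R_k + k(k-1) S_{k-2}` for `k = 0, …, N` (the last term
vanishing for `k = 0, 1`). -/
theorem Schem_moment_recursion (N : ℕ) (ρ : ℝ → ℝ)
    (hpos : ∀ x, 0 ≤ ρ x)
    (hmom : ∀ k ≤ N, Integrable (fun x : ℝ => |x| ^ k * ρ x)) :
    (∀ k ≤ N, Integrable (fun x : ℝ => |x| ^ k * Schem ρ x)) ∧
    (∀ k ≤ N, ∫ x : ℝ, x ^ k * Schem ρ x =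
      (∫ x : ℝ, x ^ k * ρ x) +
        (k : ℝ) * ((k : ℝ) - 1) * ∫ x : ℝ, x ^ (k - 2) * Schem ρ x) :=
  Schem_moment_recursion_general N ρ hmom
end

section
/- Let M > 2. Then every solution (A_{2,0}, A_{1,1}, A_{0,2}) of the linear ODE system A_{2,0}' = 2A_{1,1}, A_{1,1}' = A_{0,2} − M A_{1,1} − M A_{2,0}, A_{0,2}' = 2M A_{2,0} − M A_{0,2} + 2M² converges as t → ∞ to the unique steady state (A_{2,0}, A_{1,1}, A_{0,2}) = (2M/(M−2), 0, 2M²/(M−2)). -/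
/-!
Shift the unknowns to `X = A₂₀ - 2M/(M-2)`, `Y = A₁₁`, `W = A₀₂ - 2A₂₀ - 2M`; the system becomes
the homogeneous one `X' = 2Y`, `Y' = -(M-2)X - MY + W`, `W' = -MW - 4Y`. Along it the energy
`(M-2)X²/2 + Y² + W²/4` has derivative `-2MY² - MW²/2`, and adding the small cross term `εXY`,
`ε = (M-2)/M²`, makes it a strict Lyapunov function `V` with `V' ≤ -(ε/2) V`. Hence `V`, and with
it `X² + Y² + W²`, decays exponentially.
-/

open Filter Real Topology

theorem tendsto_zero_of_sq_le_mul {α : Type*} {l : Filter α} {f V : α → ℝ} {C : ℝ}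
    (hV : Tendsto V l (𝓝 0)) (hf : ∀ t, f t ^ 2 ≤ C * V t) : Tendsto f l (𝓝 0) := by
  have hsq : Tendsto (fun t => f t ^ 2) l (𝓝 0) := by
    refine tendsto_of_tendsto_of_tendsto_of_le_of_le tendsto_const_nhds ?_
      (fun t => sq_nonneg (f t)) hf
    simpa using hV.const_mul C
  rw [tendsto_zero_iff_abs_tendsto_zero]
  simpa [Real.sqrt_sq_eq_abs, Function.comp_def] using hsq.sqrt

theorem antitone_exp_mul_of_hasDerivAt_le_neg_mul {V V' : ℝ → ℝ} {c : ℝ}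
    (hV : ∀ t, HasDerivAt V (V' t) t) (hV' : ∀ t, V' t ≤ -c * V t) :
    Antitone fun t => exp (c * t) * V t := by
  refine antitone_of_hasDerivAt_nonpos (f' := fun t => exp (c * t) * (c * V t + V' t))
    (fun t => (((hasDerivAt_id t).const_mul c).exp.mul (hV t)).congr_deriv (by simp; ring))
    fun t => mul_nonpos_of_nonneg_of_nonpos (exp_pos _).le (by linarith [hV' t])

theorem tendsto_zero_of_hasDerivAt_le_neg_mul {V V' : ℝ → ℝ} {c : ℝ} (hc : 0 < c)
    (hV : ∀ t, HasDerivAt V (V' t) t) (hV' : ∀ t, V' t ≤ -c * V t) (hV0 : ∀ t, 0 ≤ V t) :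
    Tendsto V atTop (𝓝 0) := by
  have hbound : ∀ t, 0 ≤ t → V t ≤ V 0 * exp (-(c * t)) := fun t ht => by
    have := antitone_exp_mul_of_hasDerivAt_le_neg_mul hV hV' ht
    rw [exp_neg, ← div_eq_mul_inv, le_div_iff₀ (exp_pos _)]
    simpa [mul_comm] using this
  have hexp : Tendsto (fun t => V 0 * exp (-(c * t))) atTop (𝓝 0) := by
    simpa using (tendsto_exp_neg_atTop_nhds_zero.comp
      (tendsto_id.const_mul_atTop hc)).const_mul (V 0)
  refine tendsto_of_tendsto_of_tendsto_of_le_of_le' tendsto_const_nhds hexp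
    (Eventually.of_forall hV0) ?_
  filter_upwards [eventually_ge_atTop 0] with t ht using hbound t ht

noncomputable def modelALyapunov (M ε x y w : ℝ) : ℝ :=
  (M - 2) / 2 * x ^ 2 + ε * (x * y) + y ^ 2 + w ^ 2 / 4

theorem HasDerivAt.modelALyapunov {X Y W : ℝ → ℝ} {X' Y' W' M ε t : ℝ}
    (hX : HasDerivAt X X' t) (hY : HasDerivAt Y Y' t) (hW : HasDerivAt W W' t) :
    HasDerivAt (fun s => modelALyapunov M ε (X s) (Y s) (W s))
      ((M - 2) * X t * X' + ε * (X' * Y t + X t * Y') + 2 * Y t * Y' + W t * W' / 2) t := by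
  unfold _root_.modelALyapunov
  refine ((((hX.pow 2).const_mul ((M - 2) / 2)).add ((hX.mul hY).const_mul ε)).add
    (hY.pow 2)).add ((hW.pow 2).div_const 4) |>.congr_deriv ?_
  push_cast
  ring

section Lyapunov

variable {M ε : ℝ}

theorem modelALyapunov_lower_bound (hM : 2 < M) (hε : ε * M ^ 2 = M - 2) (x y w : ℝ) :
    (M - 2) / 4 * x ^ 2 + y ^ 2 / 2 + w ^ 2 / 4 ≤ modelALyapunov M ε x y w := by
  unfold modelALyapunov
  have hε0 : 0 < ε := by nlinarith
  have hε2 : ε ^ 2 ≤ (M - 2) / 2 := by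
    nlinarith [sq_nonneg (M - 4), mul_nonneg hε0.le (sub_nonneg.2 (by nlinarith : 4 ≤ M ^ 2))]
  nlinarith [sq_nonneg (ε * x + y), mul_nonneg (sub_nonneg.2 hε2) (sq_nonneg x)]

theorem modelALyapunov_nonneg (hM : 2 < M) (hε : ε * M ^ 2 = M - 2) (x y w : ℝ) :
    0 ≤ modelALyapunov M ε x y w := by
  have : 0 < M - 2 := by linarith
  exact le_trans (by positivity) (modelALyapunov_lower_bound hM hε x y w)

/-- The left side is the derivative of `modelALyapunov` along the shifted system, in the form
produced by `HasDerivAt.modelALyapunov`. -/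
theorem modelALyapunov_deriv_le (hM : 2 < M) (hε : ε * M ^ 2 = M - 2) (x y w : ℝ) :
    (M - 2) * x * (2 * y) + ε * (2 * y * y + x * (-(M - 2) * x - M * y + w))
      + 2 * y * (-(M - 2) * x - M * y + w) + w * (-M * w - 4 * y) / 2
      ≤ -(ε / 2) * modelALyapunov M ε x y w := by
  unfold modelALyapunov
  set q := M - 2
  have hq : 0 < q := by linarith
  have hε0 : 0 < ε := by nlinarith
  have hεq : 4 * ε ≤ q := by
    nlinarith [mul_nonneg hε0.le (sub_nonneg.2 (by nlinarith : 4 ≤ M ^ 2))]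
  have hε8 : 8 * ε ≤ 1 := by nlinarith [sq_nonneg (M - 4)]
  have hxy : -(ε * M * (x * y)) ≤ ε * q / 4 * x ^ 2 + y ^ 2 := by
    have hsq : q * (ε * q / 4 * x ^ 2 + y ^ 2 + ε * M * (x * y)) =
        ε * (q * x / 2 + M * y) ^ 2 := by
      linear_combination (-y ^ 2) * hε
    have := (mul_nonneg_iff_of_pos_left hq).1 (by rw [hsq]; positivity)
    linarith
  have hxw : ε * (x * w) ≤ ε * q / 4 * x ^ 2 + w ^ 2 / 4 := by
    have hsq : q * (ε * q / 4 * x ^ 2 + w ^ 2 / 4 - ε * (x * w)) =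
        ε * (q * x / 2 - w) ^ 2 + (q / 4 - ε) * w ^ 2 := by
      ring
    have := (mul_nonneg_iff_of_pos_left hq).1 (by
      rw [hsq]; exact add_nonneg (by positivity) (mul_nonneg (by linarith) (sq_nonneg w)))
    linarith
  have hxy' : ε ^ 2 * (x * y) ≤ ε ^ 2 * (x ^ 2 + y ^ 2) / 2 := by
    nlinarith [mul_nonneg (sq_nonneg ε) (sq_nonneg (x - y))]
  have hy : 0 ≤ (2 * M - 2 * ε - 1 - ε / 2 - ε ^ 2 / 4) * y ^ 2 :=
    mul_nonneg (by nlinarith) (sq_nonneg y)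
  nlinarith [mul_nonneg (mul_nonneg hε0.le (by linarith : 0 ≤ q - ε)) (sq_nonneg x), sq_nonneg w]

end Lyapunov

theorem modelA_shifted_tendsto_zero {M : ℝ} (hM : 2 < M) {X Y W : ℝ → ℝ}
    (hX : ∀ t, HasDerivAt X (2 * Y t) t)
    (hY : ∀ t, HasDerivAt Y (-(M - 2) * X t - M * Y t + W t) t)
    (hW : ∀ t, HasDerivAt W (-M * W t - 4 * Y t) t) :
    Tendsto X atTop (𝓝 0) ∧ Tendsto Y atTop (𝓝 0) ∧ Tendsto W atTop (𝓝 0) := by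
  set ε := (M - 2) / M ^ 2
  have hε : ε * M ^ 2 = M - 2 := div_mul_cancel₀ _ (by positivity)
  have hε0 : 0 < ε := div_pos (by linarith) (by positivity)
  set V := fun t => modelALyapunov M ε (X t) (Y t) (W t)
  have hV : Tendsto V atTop (𝓝 0) :=
    tendsto_zero_of_hasDerivAt_le_neg_mul (half_pos hε0)
      (fun t => (hX t).modelALyapunov (hY t) (hW t))
      (fun t => modelALyapunov_deriv_le hM hε _ _ _)
      (fun t => modelALyapunov_nonneg hM hε _ _ _)
  have hlow := fun t => modelALyapunov_lower_bound hM hε (X t) (Y t) (W t)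
  have hq : 0 < M - 2 := by linarith
  refine ⟨tendsto_zero_of_sq_le_mul (C := 4 / (M - 2)) hV fun t => ?_,
    tendsto_zero_of_sq_le_mul (C := 2) hV fun t => ?_,
    tendsto_zero_of_sq_le_mul (C := 4) hV fun t => ?_⟩
  · rw [div_mul_eq_mul_div, le_div_iff₀ hq]
    nlinarith [hlow t, sq_nonneg (Y t), sq_nonneg (W t)]
  · nlinarith [hlow t, sq_nonneg (W t), mul_nonneg hq.le (sq_nonneg (X t))]
  · nlinarith [hlow t, sq_nonneg (Y t), mul_nonneg hq.le (sq_nonneg (X t))]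

theorem modelA_steady_state_unique {M : ℝ} (hM : 2 < M) (x y z : ℝ) (hx : 2 * y = 0)
    (hy : z - M * y - M * x = 0) (hz : 2 * M * x - M * z + 2 * M ^ 2 = 0) :
    x = 2 * M / (M - 2) ∧ y = 0 ∧ z = 2 * M ^ 2 / (M - 2) := by
  have hq : M - 2 ≠ 0 := by linarith
  have hy0 : y = 0 := by linarith
  subst hy0
  have hzx : z = M * x := by linarith
  subst hzx
  have hx' : x = 2 * M / (M - 2) := by
    rw [eq_div_iff hq]
    have : M * ((M - 2) * x - 2 * M) = 0 := by linear_combination -hz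
    rcases mul_eq_zero.1 this with h | h <;> linarith
  refine ⟨hx', rfl, ?_⟩
  rw [hx']
  field_simp

/-- For `M > 2`, every solution of the second-order moment ODE system of Model A
converges to the unique steady state `(2M/(M−2), 0, 2M²/(M−2))`. -/
theorem modelA_moments_converge (M : ℝ) (hM : 2 < M)
    (A20 A11 A02 : ℝ → ℝ)
    (h20 : ∀ t : ℝ, HasDerivAt A20 (2 * A11 t) t)
    (h11 : ∀ t : ℝ, HasDerivAt A11 (A02 t - M * A11 t - M * A20 t) t)
    (h02 : ∀ t : ℝ, HasDerivAt A02 (2 * M * A20 t - M * A02 t + 2 * M ^ 2) t) :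
    Tendsto A20 atTop (nhds (2 * M / (M - 2))) ∧
    Tendsto A11 atTop (nhds 0) ∧
    Tendsto A02 atTop (nhds (2 * M ^ 2 / (M - 2))) ∧
    (∀ x y z : ℝ, 2 * y = 0 → z - M * y - M * x = 0 →
      2 * M * x - M * z + 2 * M ^ 2 = 0 →
      x = 2 * M / (M - 2) ∧ y = 0 ∧ z = 2 * M ^ 2 / (M - 2)) := by
  have hq : M - 2 ≠ 0 := by linarith
  obtain ⟨hX, hY, hW⟩ := modelA_shifted_tendsto_zero hM
    (X := fun t => A20 t - 2 * M / (M - 2)) (W := fun t => A02 t - 2 * A20 t - 2 * M)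
    (fun t => (h20 t).sub_const _)
    (fun t => (h11 t).congr_deriv (by field_simp; ring))
    (fun t => (((h02 t).sub ((h20 t).const_mul 2)).sub_const _).congr_deriv (by ring))
  have h20lim : Tendsto A20 atTop (𝓝 (2 * M / (M - 2))) := by
    simpa using hX.add_const (2 * M / (M - 2))
  refine ⟨h20lim, hY, ?_, modelA_steady_state_unique hM⟩
  have h02lim := (hW.add (h20lim.const_mul 2)).add_const (2 * M)
  convert h02lim using 2
  · ring
  · field_simp
    ring
end

section
/- For N ∈ ℕ, N ≥ 1, and M > 0, define the polynomial p_N(λ) = −λ(−M−λ)^N + M·N!·Σ_{n=0}^{N−1} (−M−λ)^n/n! + (−1)^N M·N!. Then for each fixed M > 0 there exists N₀ ∈ ℕ such that for all N ≥ N₀ the polynomial p_N has at least one real positive root. -/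
/-- The characteristic polynomial `p_N` of the `N`-th order moment system of Model A:
`p_N(λ) = −λ(−M−λ)^N + M·N!·Σ_{n=0}^{N−1} (−M−λ)^n/n! + (−1)^N M·N!` (real version). -/
noncomputable def pCharAR (N : ℕ) (M : ℝ) (x : ℝ) : ℝ :=
  -x * (-M - x) ^ N +
    M * (N.factorial : ℝ) *
      ∑ n ∈ Finset.range N, (-M - x) ^ n / (n.factorial : ℝ) +
    (-1) ^ N * M * (N.factorial : ℝ)

/-!
Multiplying by `(-1)^N` normalises the sign: `(-1)^N p_N(λ) = -λ(M+λ)^N + O(N·N!·(M+λ)^N)`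
is negative for large `λ`, while `(-1)^N p_N(0) = M·N!·(1 + (-1)^N Σ_{n<N} (-M)^n/n!)`.
The partial sums tend to `e^{-M} ∈ (0, 1)`, so for large `N` the value at `0` is positive
and the intermediate value theorem produces a positive root.
-/

open Filter Finset Topology Nat

theorem Real.tendsto_sum_range_pow_div_factorial (x : ℝ) :
    Tendsto (fun N ↦ ∑ n ∈ range N, x ^ n / n !) atTop (𝓝 (Real.exp x)) := by
  rw [Real.exp_eq_exp_ℝ]
  exact (NormedSpace.expSeries_div_hasSum_exp x).tendsto_sum_nat

theorem eventually_abs_sum_range_neg_pow_div_factorial_lt_one {M : ℝ} (hM : 0 < M) :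
    ∀ᶠ N in atTop, |∑ n ∈ range N, (-M) ^ n / n !| < 1 := by
  refine (Real.tendsto_sum_range_pow_div_factorial (-M)).eventually
    ((isOpen_lt continuous_abs continuous_const).mem_nhds ?_)
  rw [Set.mem_ofPred_eq, abs_of_pos (Real.exp_pos _), Real.exp_lt_one_iff]
  linarith

theorem abs_sum_range_pow_div_factorial_le {z : ℝ} (hz : 1 ≤ |z|) (N : ℕ) :
    |∑ n ∈ range N, z ^ n / n !| ≤ N * |z| ^ N :=
  calc |∑ n ∈ range N, z ^ n / n !|
      ≤ ∑ n ∈ range N, |z| ^ n / n ! := by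
        refine (abs_sum_le_sum_abs _ _).trans_eq (sum_congr rfl fun n _ ↦ ?_)
        rw [abs_div, abs_pow, Nat.abs_cast]
    _ ≤ ∑ _n ∈ range N, |z| ^ N := by
        refine sum_le_sum fun n hn ↦ ?_
        calc |z| ^ n / n ! ≤ |z| ^ n := div_le_self (by positivity) (mod_cast n.factorial_pos)
          _ ≤ |z| ^ N := pow_le_pow_right₀ hz (mem_range.mp hn).le
    _ = N * |z| ^ N := by rw [sum_const, card_range, nsmul_eq_mul]

theorem neg_one_pow_mul_pCharAR (N : ℕ) (M x : ℝ) :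
    (-1) ^ N * pCharAR N M x =
      -x * (M + x) ^ N + (-1) ^ N * (M * N ! * ∑ n ∈ range N, (-M - x) ^ n / n !) + M * N ! := by
  have hsign : ((-1 : ℝ) ^ N) ^ 2 = 1 := by rw [← pow_mul, mul_comm, pow_mul, neg_one_sq, one_pow]
  have hpow : (-M - x) ^ N = (-1) ^ N * (M + x) ^ N := by rw [← mul_pow]; ring
  rw [pCharAR, hpow]
  linear_combination (-x * (M + x) ^ N + M * N !) * hsign

theorem neg_one_pow_mul_pCharAR_zero_pos {N : ℕ} {M : ℝ} (hM : 0 < M)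
    (hS : |∑ n ∈ range N, (-M) ^ n / n !| < 1) : 0 < (-1) ^ N * pCharAR N M 0 := by
  rw [neg_one_pow_mul_pCharAR]
  have := neg_abs_le ((-1 : ℝ) ^ N * ∑ n ∈ range N, (-M) ^ n / n !)
  rw [abs_mul, abs_pow, abs_neg, abs_one, one_pow, one_mul] at this
  have hMN : 0 < M * N ! := by positivity
  simp only [add_zero, sub_zero, neg_zero, zero_mul, zero_add]
  nlinarith

theorem neg_one_pow_mul_pCharAR_le {N : ℕ} {M x : ℝ} (hM : 0 ≤ M) (hx : 1 ≤ M + x) :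
    (-1) ^ N * pCharAR N M x ≤ (M * N ! * (N + 1) - x) * (M + x) ^ N := by
  have habs : |-M - x| = M + x := by rw [← neg_add', abs_neg, abs_of_pos (by linarith)]
  have hsum := abs_sum_range_pow_div_factorial_le (habs ▸ hx) N
  rw [habs] at hsum
  have hMN : 0 ≤ M * N ! := by positivity
  have hterm : (-1) ^ N * (M * N ! * ∑ n ∈ range N, (-M - x) ^ n / n !) ≤
      M * N ! * (N * (M + x) ^ N) := by
    refine (le_abs_self _).trans ?_
    rw [abs_mul, abs_pow, abs_neg, abs_one, one_pow, one_mul, abs_mul, abs_of_nonneg hMN]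
    exact mul_le_mul_of_nonneg_left hsum hMN
  have hpow : M * N ! ≤ M * N ! * (M + x) ^ N := le_mul_of_one_le_right hMN (one_le_pow₀ hx)
  rw [neg_one_pow_mul_pCharAR]
  linarith

theorem exists_pos_pCharAR_eq_zero {N : ℕ} {M : ℝ} (hM : 0 < M)
    (hS : |∑ n ∈ range N, (-M) ^ n / n !| < 1) : ∃ x, 0 < x ∧ pCharAR N M x = 0 := by
  set b : ℝ := M * N ! * (N + 1) + 1
  have hb : 0 < b := by positivity
  have hMb : 1 ≤ M + b := by
    have : 0 ≤ M * N ! * (N + 1) := by positivity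
    linarith
  have hneg : (-1) ^ N * pCharAR N M b < 0 :=
    (neg_one_pow_mul_pCharAR_le hM.le hMb).trans_lt
      (mul_neg_of_neg_of_pos (by linarith) (by positivity))
  have hcont : ContinuousOn (fun x ↦ (-1) ^ N * pCharAR N M x) (Set.Icc 0 b) := by
    unfold pCharAR; fun_prop
  obtain ⟨x, hx, hroot⟩ :=
    intermediate_value_Ioo' hb.le hcont ⟨hneg, neg_one_pow_mul_pCharAR_zero_pos hM hS⟩
  exact ⟨x, hx.1, (mul_eq_zero.mp hroot).resolve_left (pow_ne_zero _ (by norm_num))⟩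

/-- For each fixed mass `M > 0` and all large enough `N`, the polynomial `p_N` has at
least one positive (real) root. -/
theorem pCharA_unstable_for_large_order (M : ℝ) (hM : 0 < M) :
    ∃ N₀ : ℕ, 1 ≤ N₀ ∧ ∀ N : ℕ, N₀ ≤ N → ∃ x : ℝ, 0 < x ∧ pCharAR N M x = 0 := by
  obtain ⟨N₁, hN₁⟩ :=
    (eventually_abs_sum_range_neg_pow_div_factorial_lt_one hM).exists_forall_of_atTop
  exact ⟨max N₁ 1, le_max_right _ _, fun N hN ↦
    exists_pos_pCharAR_eq_zero hM (hN₁ N (le_of_max_le_left hN))⟩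
end

section
/- For all real ξ, k and all s ≥ 0, the inequality (1 + (ξ(1+s) − k)²)(1 + (ξs − k)²) ≥ 1 + ξ²/5 + k²/(5(2s+1)²) holds; consequently (1 + ξ² + k²) / ((2s+1)² (1 + (ξ(1+s) − k)²)(1 + (ξs − k)²)) ≤ 5 for all real ξ, k and s ≥ 0. -/
/-!
In the variables `a = ξ(1+s) - k`, `b = ξs - k` one has `ξ = a - b` and `k = as - b(1+s)`, so
`ξ² ≤ 2(a² + b²)` and, by Cauchy–Schwarz with `s² + (1+s)² ≤ (2s+1)²`, `k² ≤ (2s+1)²(a² + b²)`;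
both are dominated by `(1+a²)(1+b²) - 1 ≥ a² + b²`. The quotient bound follows from the product
bound because `(2s+1)² ≥ 1`.
-/

section LinearOrderedField

variable {R : Type*} [Field R] [LinearOrder R] [IsStrictOrderedRing R]

lemma sq_mul_sub_mul_one_add_le (a b s : R) (hs : 0 ≤ s) :
    (a * s - b * (1 + s)) ^ 2 ≤ (2 * s + 1) ^ 2 * (a ^ 2 + b ^ 2) :=
  calc (a * s - b * (1 + s)) ^ 2
      ≤ (a ^ 2 + b ^ 2) * (s ^ 2 + (1 + s) ^ 2) := by
        rw [sq_add_sq_mul_sq_add_sq]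
        exact le_add_of_nonneg_right (sq_nonneg _)
    _ ≤ (2 * s + 1) ^ 2 * (a ^ 2 + b ^ 2) := by
        rw [mul_comm]
        gcongr
        nlinarith

lemma sub_sq_add_sq_div_le (a b s : R) (hs : 0 ≤ s) :
    (a - b) ^ 2 + (a * s - b * (1 + s)) ^ 2 / (2 * s + 1) ^ 2 ≤ 3 * (a ^ 2 + b ^ 2) := by
  have hsub : (a - b) ^ 2 ≤ 2 * (a ^ 2 + b ^ 2) := by
    simpa only [sub_eq_add_neg, neg_sq] using add_sq_le (a := a) (b := -b)
  have hk : (a * s - b * (1 + s)) ^ 2 / (2 * s + 1) ^ 2 ≤ a ^ 2 + b ^ 2 := by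
    rw [div_le_iff₀' (by positivity)]
    exact sq_mul_sub_mul_one_add_le a b s hs
  linarith

lemma div_le_five_of_le {x y c p : R} (hx : 0 ≤ x) (hy : 0 ≤ y) (hc : 1 ≤ c)
    (h : 1 + x / 5 + y / (5 * c) ≤ p) : (1 + x + y) / (c * p) ≤ 5 := by
  have hcp : c + c * x / 5 + y / 5 ≤ c * p := by
    calc c + c * x / 5 + y / 5 = c * (1 + x / 5 + y / (5 * c)) := by field_simp
      _ ≤ c * p := by gcongr
  have hcx : x ≤ c * x := le_mul_of_one_le_left hx hc
  rw [div_le_iff₀ (by linarith)]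
  linarith

end LinearOrderedField

/-- The elementary inequality used to bootstrap Fourier decay of stationary solutions
of Model A: for all real `ξ, k` and `s ≥ 0`,
`(1+(ξ(1+s)−k)²)(1+(ξs−k)²) ≥ 1 + ξ²/5 + k²/(5(2s+1)²)`, and consequently
`(1+ξ²+k²) / ((2s+1)²(1+(ξ(1+s)−k)²)(1+(ξs−k)²)) ≤ 5`. -/
theorem fourier_decay_key_inequality (ξ k s : ℝ) (hs : 0 ≤ s) :
    1 + ξ ^ 2 / 5 + k ^ 2 / (5 * (2 * s + 1) ^ 2) ≤
      (1 + (ξ * (1 + s) - k) ^ 2) * (1 + (ξ * s - k) ^ 2) ∧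
    (1 + ξ ^ 2 + k ^ 2) /
        ((2 * s + 1) ^ 2 * (1 + (ξ * (1 + s) - k) ^ 2) * (1 + (ξ * s - k) ^ 2)) ≤ 5 := by
  set a := ξ * (1 + s) - k
  set b := ξ * s - k
  have hξ : ξ = a - b := by ring
  have hk : k = a * s - b * (1 + s) := by ring
  have hprod : 1 + ξ ^ 2 / 5 + k ^ 2 / (5 * (2 * s + 1) ^ 2) ≤ (1 + a ^ 2) * (1 + b ^ 2) :=
    calc 1 + ξ ^ 2 / 5 + k ^ 2 / (5 * (2 * s + 1) ^ 2)
        = 1 + ((a - b) ^ 2 + (a * s - b * (1 + s)) ^ 2 / (2 * s + 1) ^ 2) / 5 := by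
          rw [← hξ, ← hk, add_div, div_div, mul_comm ((2 * s + 1) ^ 2)]; ring
      _ ≤ 1 + 3 * (a ^ 2 + b ^ 2) / 5 := by gcongr; exact sub_sq_add_sq_div_le a b s hs
      _ ≤ (1 + a ^ 2) * (1 + b ^ 2) := by nlinarith [mul_nonneg (sq_nonneg a) (sq_nonneg b)]
  refine ⟨hprod, ?_⟩
  rw [mul_assoc]
  exact div_le_five_of_le (sq_nonneg ξ) (sq_nonneg k) (one_le_pow₀ (by linarith)) hprod
end
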